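/- arXiv:2503.07769 — 2 statements merged into one kernel-verified Lean document; each statement's English description precedes it below -/
import Mathlib

section
/- Let G be a connected weighted graph with nonnegative edge lengths and 𝒢 its continuous graph, and let H be a connected subgraph of G with continuous subgraph ℋ. Then the diameter of ℋ with respect to 𝒢, i.e. sup over p,q ∈ ℋ of d_𝒢(p,q), equals one half of the maximum over ordered pairs of edges aa', bb' of H of the length of a shortest closed walk in G passing through all interior points of aa' and of bb'. -/
/-!
Cutting a closed walk through the edges `aa'` and `bb'` at points `p ∈ aa'` and `q ∈ bb'` splits
it into two connections between `p` and `q`, so `2 d(p, q)` is at most its length; when the two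
edges coincide, one of the pieces is replaced by the segment between `p` and `q`.

Conversely, let `c` be the least length of a closed walk through both edges, so that
`c ≤ ℓ(aa') + d(a', b) + ℓ(bb') + d(b', a)`, and likewise with `b` and `b'` exchanged. Put `p` on
`aa'` at the same distance `g` from `b` through `a` as through `a'`, and `q` on `bb'` at distance
`max 0 (c/2 - g)` from `b`. Connections from `p` to `q` through `b` then have length at least
`c/2` by the choice of `q`, and those through `b'` by the two bounds on `c` and the triangle
inequality.
-/

open SimpleGraph

variable {V : Type*}

/-- Length of a walk in a weighted graph: the sum of the lengths of its edges,
counted with multiplicity. -/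
noncomputable def walkLen (ℓ : V → V → ℝ) {G : SimpleGraph V} {a b : V} (w : G.Walk a b) : ℝ :=
  (w.darts.map (fun d => ℓ d.toProd.1 d.toProd.2)).sum

/-- Shortest-path distance in the weighted graph: infimum of walk lengths. -/
noncomputable def gdist (G : SimpleGraph V) (ℓ : V → V → ℝ) (a b : V) : ℝ :=
  sInf {x | ∃ w : G.Walk a b, walkLen ℓ w = x}

/-- Endpoint (`u` or `v`) of the edge carrying a point `(u, v, lam)` of the continuous graph. -/
def ept (p : V × V × ℝ) : Bool → V := fun i => if i then p.2.1 else p.1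

/-- Offset of a point `(u, v, lam)` of the continuous graph to the chosen endpoint of its edge. -/
def off (ℓ : V → V → ℝ) (p : V × V × ℝ) : Bool → ℝ :=
  fun i => if i then ℓ p.1 p.2.1 - p.2.2 else p.2.2

/-- Geodesic distance between two points of the continuous graph `𝒢` of `G`:
a point `(u, v, lam)` lies on edge `uv` at distance `lam` along the edge from `u`.
It is the infimum of the lengths of all connections: leave the first edge through one of
its endpoints, walk in `G`, and enter the second edge through one of its endpoints;
or, if both points lie on the same edge, travel directly along that edge. -/
noncomputable def pdist (G : SimpleGraph V) (ℓ : V → V → ℝ) (p q : V × V × ℝ) : ℝ :=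
  sInf ({x | ∃ (i j : Bool) (w : G.Walk (ept p i) (ept q j)),
        x = off ℓ p i + walkLen ℓ w + off ℓ q j}
    ∪ {x | (p.1, p.2.1) = (q.1, q.2.1) ∧ x = |p.2.2 - q.2.2|}
    ∪ {x | (p.1, p.2.1) = (q.2.1, q.1) ∧ x = |p.2.2 - (ℓ q.1 q.2.1 - q.2.2)|})

def closedWalkLengths (G : SimpleGraph V) (ℓ : V → V → ℝ) (e f : Sym2 V) : Set ℝ :=
  {y | ∃ (r : V) (w : G.Walk r r), e ∈ w.edges ∧ f ∈ w.edges ∧ walkLen ℓ w = y}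

section

variable {G : SimpleGraph V} {ℓ : V → V → ℝ}

@[simp]
lemma walkLen_nil {u : V} : walkLen ℓ (Walk.nil : G.Walk u u) = 0 := rfl

@[simp]
lemma walkLen_cons {u v w : V} (h : G.Adj u v) (p : G.Walk v w) :
    walkLen ℓ (Walk.cons h p) = ℓ u v + walkLen ℓ p := by
  simp [walkLen]

@[simp]
lemma walkLen_append {u v w : V} (p : G.Walk u v) (q : G.Walk v w) :
    walkLen ℓ (p.append q) = walkLen ℓ p + walkLen ℓ q := by
  simp [walkLen]

@[simp]
lemma walkLen_toWalk {u v : V} (h : G.Adj u v) : walkLen ℓ h.toWalk = ℓ u v := by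
  simp [Adj.toWalk]

lemma walkLen_reverse (hsym : ∀ u v, ℓ u v = ℓ v u) {u v : V} (p : G.Walk u v) :
    walkLen ℓ p.reverse = walkLen ℓ p := by
  induction p with
  | nil => rfl
  | cons h p ih => simp [Walk.reverse_cons, ih, hsym, add_comm]

lemma walkLen_nonneg (hnn : ∀ u v, 0 ≤ ℓ u v) {u v : V} (p : G.Walk u v) :
    0 ≤ walkLen ℓ p :=
  List.sum_nonneg fun _ hx => by
    obtain ⟨d, -, rfl⟩ := List.mem_map.mp hx
    exact hnn _ _

lemma exists_walk_of_mem_edges_of_closed (hsym : ∀ u v, ℓ u v = ℓ v u) {a a' r : V}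
    (hab : G.Adj a a') (w : G.Walk r r) (he : s(a, a') ∈ w.edges) :
    ∃ u : G.Walk a' a, walkLen ℓ w = ℓ a a' + walkLen ℓ u ∧ w.edges ⊆ s(a, a') :: u.edges := by
  rcases (Walk.isSubwalk_toWalk_iff_mem_edges hab).mpr he with ⟨p, q, rfl⟩ | ⟨p, q, rfl⟩
  · refine ⟨q.append p, by simp; ring, fun e he => ?_⟩
    simp only [Walk.edges_append, Adj.edges_toWalk, List.mem_append, List.mem_cons] at he ⊢
    tauto
  · refine ⟨(q.append p).reverse, by simp [walkLen_reverse hsym, hsym a' a]; ring, fun e he => ?_⟩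
    simp only [Walk.edges_append, Walk.edges_reverse, Adj.edges_toWalk, List.mem_append,
      List.mem_reverse, List.mem_cons, Sym2.eq_swap] at he ⊢
    tauto

lemma gdist_le_walkLen (hnn : ∀ u v, 0 ≤ ℓ u v) {x y : V} (w : G.Walk x y) :
    gdist G ℓ x y ≤ walkLen ℓ w :=
  csInf_le ⟨0, fun _ ⟨w, hw⟩ => hw ▸ walkLen_nonneg hnn w⟩ ⟨w, rfl⟩

lemma le_gdist {x y : V} (hr : G.Reachable x y) {t : ℝ}
    (h : ∀ w : G.Walk x y, t ≤ walkLen ℓ w) : t ≤ gdist G ℓ x y :=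
  le_csInf (hr.elim fun w => ⟨_, w, rfl⟩) fun _ ⟨w, hw⟩ => hw ▸ h w

lemma gdist_nonneg (hnn : ∀ u v, 0 ≤ ℓ u v) (x y : V) : 0 ≤ gdist G ℓ x y :=
  Real.sInf_nonneg fun _ ⟨w, hw⟩ => hw ▸ walkLen_nonneg hnn w

@[simp]
lemma gdist_self (hnn : ∀ u v, 0 ≤ ℓ u v) (x : V) : gdist G ℓ x x = 0 :=
  le_antisymm (gdist_le_walkLen hnn Walk.nil) (gdist_nonneg hnn x x)

lemma gdist_comm (hsym : ∀ u v, ℓ u v = ℓ v u) (x y : V) : gdist G ℓ x y = gdist G ℓ y x := by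
  unfold gdist
  congr 1
  ext t
  constructor <;> rintro ⟨w, rfl⟩ <;> exact ⟨w.reverse, walkLen_reverse hsym w⟩

lemma gdist_le_add_gdist_of_adj (hnn : ∀ u v, 0 ≤ ℓ u v) {u v y : V} (huv : G.Adj u v)
    (hr : G.Reachable v y) : gdist G ℓ u y ≤ ℓ u v + gdist G ℓ v y := by
  have : gdist G ℓ u y - ℓ u v ≤ gdist G ℓ v y := le_gdist hr fun w => by
    linarith [gdist_le_walkLen hnn (Walk.cons huv w), walkLen_cons (ℓ := ℓ) huv w]
  linarith

lemma gdist_le_gdist_add_of_adj (hsym : ∀ u v, ℓ u v = ℓ v u) (hnn : ∀ u v, 0 ≤ ℓ u v)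
    {x u v : V} (huv : G.Adj u v) (hr : G.Reachable x u) :
    gdist G ℓ x v ≤ gdist G ℓ x u + ℓ u v := by
  rw [gdist_comm hsym x v, gdist_comm hsym x u, hsym u v, add_comm]
  exact gdist_le_add_gdist_of_adj hnn huv.symm hr.symm

lemma off_nonneg {p : V × V × ℝ} (hp : p.2.2 ∈ Set.Icc 0 (ℓ p.1 p.2.1)) (i : Bool) :
    0 ≤ off ℓ p i := by
  cases i
  · exact hp.1
  · simpa [off] using hp.2

lemma off_add_off_not (p : V × V × ℝ) (i : Bool) : off ℓ p i + off ℓ p (!i) = ℓ p.1 p.2.1 := by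
  cases i <;> simp [off]

lemma pdist_le_of_mem (hnn : ∀ u v, 0 ≤ ℓ u v) {p q : V × V × ℝ}
    (hp : p.2.2 ∈ Set.Icc 0 (ℓ p.1 p.2.1)) (hq : q.2.2 ∈ Set.Icc 0 (ℓ q.1 q.2.1)) {x : ℝ}
    (hx : x ∈ {x | ∃ (i j : Bool) (w : G.Walk (ept p i) (ept q j)),
        x = off ℓ p i + walkLen ℓ w + off ℓ q j}
      ∪ {x | (p.1, p.2.1) = (q.1, q.2.1) ∧ x = |p.2.2 - q.2.2|}
      ∪ {x | (p.1, p.2.1) = (q.2.1, q.1) ∧ x = |p.2.2 - (ℓ q.1 q.2.1 - q.2.2)|}) :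
    pdist G ℓ p q ≤ x := by
  refine csInf_le ⟨0, ?_⟩ hx
  rintro x ((⟨i, j, w, rfl⟩ | ⟨-, rfl⟩) | ⟨-, rfl⟩)
  · exact add_nonneg (add_nonneg (off_nonneg hp i) (walkLen_nonneg hnn w)) (off_nonneg hq j)
  all_goals exact abs_nonneg _

lemma pdist_le_walkLen (hnn : ∀ u v, 0 ≤ ℓ u v) {p q : V × V × ℝ}
    (hp : p.2.2 ∈ Set.Icc 0 (ℓ p.1 p.2.1)) (hq : q.2.2 ∈ Set.Icc 0 (ℓ q.1 q.2.1))
    (i j : Bool) (w : G.Walk (ept p i) (ept q j)) :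
    pdist G ℓ p q ≤ off ℓ p i + walkLen ℓ w + off ℓ q j :=
  pdist_le_of_mem hnn hp hq (.inl (.inl ⟨i, j, w, rfl⟩))

lemma pdist_le_abs_of_eq (hnn : ∀ u v, 0 ≤ ℓ u v) {p q : V × V × ℝ}
    (hp : p.2.2 ∈ Set.Icc 0 (ℓ p.1 p.2.1)) (hq : q.2.2 ∈ Set.Icc 0 (ℓ q.1 q.2.1))
    (h : (p.1, p.2.1) = (q.1, q.2.1)) : pdist G ℓ p q ≤ |p.2.2 - q.2.2| :=
  pdist_le_of_mem hnn hp hq (.inl (.inr ⟨h, rfl⟩))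

lemma pdist_le_abs_of_eq_swap (hnn : ∀ u v, 0 ≤ ℓ u v) {p q : V × V × ℝ}
    (hp : p.2.2 ∈ Set.Icc 0 (ℓ p.1 p.2.1)) (hq : q.2.2 ∈ Set.Icc 0 (ℓ q.1 q.2.1))
    (h : (p.1, p.2.1) = (q.2.1, q.1)) : pdist G ℓ p q ≤ |p.2.2 - (ℓ q.1 q.2.1 - q.2.2)| :=
  pdist_le_of_mem hnn hp hq (.inr ⟨h, rfl⟩)

lemma le_pdist (hnn : ∀ u v, 0 ≤ ℓ u v) {p q : V × V × ℝ} (hr : G.Reachable p.1 q.1) {t : ℝ}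
    (hvert : ∀ i j, t ≤ off ℓ p i + gdist G ℓ (ept p i) (ept q j) + off ℓ q j)
    (hsame : (p.1, p.2.1) = (q.1, q.2.1) → t ≤ |p.2.2 - q.2.2|)
    (hswap : (p.1, p.2.1) = (q.2.1, q.1) → t ≤ |p.2.2 - (ℓ q.1 q.2.1 - q.2.2)|) :
    t ≤ pdist G ℓ p q := by
  refine le_csInf (hr.elim fun w => ⟨_, .inl (.inl ⟨false, false, w, rfl⟩)⟩) ?_
  rintro x ((⟨i, j, w, rfl⟩ | ⟨h, rfl⟩) | ⟨h, rfl⟩)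
  · linarith [hvert i j, gdist_le_walkLen (ℓ := ℓ) hnn w]
  · exact hsame h
  · exact hswap h

lemma two_mul_pdist_le_of_walks (hsym : ∀ u v, ℓ u v = ℓ v u) (hnn : ∀ u v, 0 ≤ ℓ u v)
    {a a' b b' : V} {lam mu : ℝ} (hl : lam ∈ Set.Icc 0 (ℓ a a'))
    (hm : mu ∈ Set.Icc 0 (ℓ b b')) (i j : Bool)
    (u₁ : G.Walk (ept (a, a', lam) i) (ept (b, b', mu) j))
    (u₂ : G.Walk (ept (b, b', mu) !j) (ept (a, a', lam) !i)) :
    2 * pdist G ℓ (a, a', lam) (b, b', mu) ≤ ℓ a a' + walkLen ℓ u₁ + ℓ b b' + walkLen ℓ u₂ := by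
  have h₁ := pdist_le_walkLen hnn hl hm i j u₁
  have h₂ := pdist_le_walkLen hnn hl hm (!i) (!j) u₂.reverse
  rw [walkLen_reverse hsym] at h₂
  linarith [off_add_off_not (ℓ := ℓ) (a, a', lam) i, off_add_off_not (ℓ := ℓ) (b, b', mu) j]

lemma two_mul_pdist_le_of_same_edge (hsym : ∀ u v, ℓ u v = ℓ v u) (hnn : ∀ u v, 0 ≤ ℓ u v)
    {a a' : V} {lam mu : ℝ} (hl : lam ∈ Set.Icc 0 (ℓ a a')) (hm : mu ∈ Set.Icc 0 (ℓ a a'))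
    (u : G.Walk a' a) : 2 * pdist G ℓ (a, a', lam) (a, a', mu) ≤ ℓ a a' + walkLen ℓ u := by
  have hd : pdist G ℓ (a, a', lam) (a, a', mu) ≤ |lam - mu| := pdist_le_abs_of_eq hnn hl hm rfl
  have h₁ : pdist G ℓ (a, a', lam) (a, a', mu) ≤ (ℓ a a' - lam) + walkLen ℓ u + mu :=
    pdist_le_walkLen (p := (a, a', lam)) (q := (a, a', mu)) hnn hl hm true false u
  have h₂ : pdist G ℓ (a, a', lam) (a, a', mu) ≤ lam + walkLen ℓ u.reverse + (ℓ a a' - mu) :=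
    pdist_le_walkLen (p := (a, a', lam)) (q := (a, a', mu)) hnn hl hm false true u.reverse
  rw [walkLen_reverse hsym] at h₂
  cases abs_cases (lam - mu) <;> linarith

lemma two_mul_pdist_le_of_same_edge_swap (hsym : ∀ u v, ℓ u v = ℓ v u)
    (hnn : ∀ u v, 0 ≤ ℓ u v) {a a' : V} {lam mu : ℝ} (hl : lam ∈ Set.Icc 0 (ℓ a a'))
    (hm : mu ∈ Set.Icc 0 (ℓ a' a)) (u : G.Walk a' a) :
    2 * pdist G ℓ (a, a', lam) (a', a, mu) ≤ ℓ a a' + walkLen ℓ u := by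
  have hd : pdist G ℓ (a, a', lam) (a', a, mu) ≤ |lam - (ℓ a' a - mu)| :=
    pdist_le_abs_of_eq_swap hnn hl hm rfl
  have h₁ : pdist G ℓ (a, a', lam) (a', a, mu) ≤ (ℓ a a' - lam) + walkLen ℓ u + (ℓ a' a - mu) :=
    pdist_le_walkLen (p := (a, a', lam)) (q := (a', a, mu)) hnn hl hm true true u
  have h₂ : pdist G ℓ (a, a', lam) (a', a, mu) ≤ lam + walkLen ℓ u.reverse + mu :=
    pdist_le_walkLen (p := (a, a', lam)) (q := (a', a, mu)) hnn hl hm false false u.reverse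
  rw [walkLen_reverse hsym] at h₂
  cases abs_cases (lam - (ℓ a' a - mu)) <;> linarith [hsym a a']

lemma two_mul_pdist_le_walkLen (hsym : ∀ u v, ℓ u v = ℓ v u) (hnn : ∀ u v, 0 ≤ ℓ u v)
    {a a' b b' r : V} {lam mu : ℝ} (hab : G.Adj a a') (hbb : G.Adj b b')
    (hl : lam ∈ Set.Icc 0 (ℓ a a')) (hm : mu ∈ Set.Icc 0 (ℓ b b')) (w : G.Walk r r)
    (he : s(a, a') ∈ w.edges) (hf : s(b, b') ∈ w.edges) :
    2 * pdist G ℓ (a, a', lam) (b, b', mu) ≤ walkLen ℓ w := by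
  obtain ⟨u, hw, hedges⟩ := exists_walk_of_mem_edges_of_closed hsym hab w he
  rw [hw]
  rcases List.mem_cons.mp (hedges hf) with hfe | hfu
  · rcases Sym2.eq_iff.mp hfe with ⟨rfl, rfl⟩ | ⟨rfl, rfl⟩
    · exact two_mul_pdist_le_of_same_edge hsym hnn hl hm u
    · exact two_mul_pdist_le_of_same_edge_swap hsym hnn hl hm u
  · rcases (Walk.isSubwalk_toWalk_iff_mem_edges hbb).mpr hfu with ⟨u₁, u₂, rfl⟩ | ⟨u₁, u₂, rfl⟩
    · have : 2 * pdist G ℓ (a, a', lam) (b, b', mu) ≤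
          ℓ a a' + walkLen ℓ u₁ + ℓ b b' + walkLen ℓ u₂ :=
        two_mul_pdist_le_of_walks hsym hnn hl hm true false u₁ u₂
      simp only [walkLen_append, walkLen_toWalk]
      linarith
    · have : 2 * pdist G ℓ (a, a', lam) (b, b', mu) ≤
          ℓ a a' + walkLen ℓ u₁ + ℓ b b' + walkLen ℓ u₂ :=
        two_mul_pdist_le_of_walks hsym hnn hl hm true true u₁ u₂
      simp only [walkLen_append, walkLen_toWalk]
      linarith [hsym b b']

lemma closedWalkLengths_nonempty (hG : G.Connected) {a a' b b' : V} (hab : G.Adj a a')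
    (hbb : G.Adj b b') : (closedWalkLengths G ℓ s(a, a') s(b, b')).Nonempty := by
  obtain ⟨w₁⟩ := hG.preconnected a' b
  obtain ⟨w₂⟩ := hG.preconnected b' a
  exact ⟨_, a, Walk.cons hab (w₁.append (Walk.cons hbb w₂)), by simp, by simp, rfl⟩

lemma two_mul_pdist_le_sInf (hG : G.Connected) (hsym : ∀ u v, ℓ u v = ℓ v u)
    (hnn : ∀ u v, 0 ≤ ℓ u v) {a a' b b' : V} {lam mu : ℝ} (hab : G.Adj a a') (hbb : G.Adj b b')
    (hl : lam ∈ Set.Icc 0 (ℓ a a')) (hm : mu ∈ Set.Icc 0 (ℓ b b')) :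
    2 * pdist G ℓ (a, a', lam) (b, b', mu) ≤ sInf (closedWalkLengths G ℓ s(a, a') s(b, b')) :=
  le_csInf (closedWalkLengths_nonempty hG hab hbb) fun _ ⟨_, w, he, hf, hw⟩ =>
    hw ▸ two_mul_pdist_le_walkLen hsym hnn hab hbb hl hm w he hf

lemma closedWalkLengths_bddBelow (hnn : ∀ u v, 0 ≤ ℓ u v) (e f : Sym2 V) :
    BddBelow (closedWalkLengths G ℓ e f) :=
  ⟨0, fun _ ⟨_, w, _, _, hw⟩ => hw ▸ walkLen_nonneg hnn w⟩

lemma sInf_closedWalkLengths_le (hnn : ∀ u v, 0 ≤ ℓ u v) (hG : G.Connected) {a a' x y : V}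
    (hab : G.Adj a a') (hxy : G.Adj x y) :
    sInf (closedWalkLengths G ℓ s(a, a') s(x, y)) ≤
      ℓ a a' + gdist G ℓ a' x + ℓ x y + gdist G ℓ y a := by
  set c := sInf (closedWalkLengths G ℓ s(a, a') s(x, y))
  have hwalks (w₁ : G.Walk a' x) (w₂ : G.Walk y a) :
      c ≤ ℓ a a' + walkLen ℓ w₁ + ℓ x y + walkLen ℓ w₂ := by
    refine csInf_le (closedWalkLengths_bddBelow hnn _ _)
      ⟨a, Walk.cons hab (w₁.append (Walk.cons hxy w₂)), by simp, by simp, ?_⟩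
    simp only [walkLen_cons, walkLen_append]
    ring
  have h₁ (w₁ : G.Walk a' x) : c - ℓ a a' - walkLen ℓ w₁ - ℓ x y ≤ gdist G ℓ y a :=
    le_gdist (hG y a) fun w₂ => by linarith [hwalks w₁ w₂]
  have h₂ : c - ℓ a a' - ℓ x y - gdist G ℓ y a ≤ gdist G ℓ a' x :=
    le_gdist (hG a' x) fun w₁ => by linarith [h₁ w₁]
  linarith

lemma sInf_closedWalkLengths_self_le (hnn : ∀ u v, 0 ≤ ℓ u v) (hG : G.Connected) {a a' : V}
    (hab : G.Adj a a') :
    sInf (closedWalkLengths G ℓ s(a, a') s(a, a')) ≤ ℓ a a' + gdist G ℓ a' a := by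
  have : sInf (closedWalkLengths G ℓ s(a, a') s(a, a')) - ℓ a a' ≤ gdist G ℓ a' a :=
    le_gdist (hG a' a) fun w => by
      have := csInf_le (closedWalkLengths_bddBelow hnn _ _)
        (⟨a, Walk.cons hab w, by simp, by simp, rfl⟩ : walkLen ℓ (Walk.cons hab w) ∈
          closedWalkLengths G ℓ s(a, a') s(a, a'))
      rw [walkLen_cons] at this
      linarith
  linarith

lemma exists_sInf_closedWalkLengths_le_two_mul_pdist (hG : G.Connected)
    (hsym : ∀ u v, ℓ u v = ℓ v u) (hnn : ∀ u v, 0 ≤ ℓ u v) {a a' b b' : V}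
    (hab : G.Adj a a') (hbb : G.Adj b b') :
    ∃ lam ∈ Set.Icc 0 (ℓ a a'), ∃ mu ∈ Set.Icc 0 (ℓ b b'),
      sInf (closedWalkLengths G ℓ s(a, a') s(b, b')) ≤ 2 * pdist G ℓ (a, a', lam) (b, b', mu) := by
  have hcross : closedWalkLengths G ℓ s(a, a') s(b', b) = closedWalkLengths G ℓ s(a, a') s(b, b') :=
    by rw [Sym2.eq_swap (a := b')]
  have hF₁ := sInf_closedWalkLengths_le (ℓ := ℓ) hnn hG hab hbb
  have hF₂ := sInf_closedWalkLengths_le (ℓ := ℓ) hnn hG hab hbb.symm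
  rw [hcross, hsym b' b, gdist_comm hsym b a] at hF₂
  rw [gdist_comm hsym b' a] at hF₁
  generalize hc : sInf (closedWalkLengths G ℓ s(a, a') s(b, b')) = c at hF₁ hF₂ ⊢
  have h_ab_a'b := gdist_le_add_gdist_of_adj (ℓ := ℓ) hnn hab (hG a' b)
  have h_a'b_ab := gdist_le_add_gdist_of_adj (ℓ := ℓ) hnn hab.symm (hG a b)
  have h_a'b_a'b' := gdist_le_gdist_add_of_adj (ℓ := ℓ) hsym hnn hbb.symm (hG a' b')
  have h_ab_ab' := gdist_le_gdist_add_of_adj (ℓ := ℓ) hsym hnn hbb.symm (hG a b')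
  have h_ab'_ab := gdist_le_gdist_add_of_adj (ℓ := ℓ) hsym hnn hbb (hG a b)
  rw [hsym a' a] at h_a'b_ab
  rw [hsym b' b] at h_a'b_a'b' h_ab_ab'
  obtain ⟨lam, hlam⟩ : ∃ lam, 2 * lam = ℓ a a' + gdist G ℓ a' b - gdist G ℓ a b :=
    ⟨(ℓ a a' + gdist G ℓ a' b - gdist G ℓ a b) / 2, by ring⟩
  obtain ⟨mu, hmu₀, hmu, hmu_le⟩ : ∃ mu, 0 ≤ mu ∧ c / 2 - (lam + gdist G ℓ a b) ≤ mu ∧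
      ∀ t, 0 ≤ t → c / 2 - (lam + gdist G ℓ a b) ≤ t → mu ≤ t :=
    ⟨_, le_max_left _ _, le_max_right _ _, fun _ => max_le⟩
  refine ⟨lam, ⟨by linarith, by linarith⟩, mu, ⟨hmu₀, hmu_le _ (hnn b b') (by linarith)⟩, ?_⟩
  suffices c / 2 ≤ pdist G ℓ (a, a', lam) (b, b', mu) by linarith
  refine le_pdist hnn (hG a b) (fun i j => ?_) (fun h => ?_) (fun h => ?_)
  · have := hmu_le (lam + gdist G ℓ a b' + ℓ b b' - c / 2) (by linarith) (by linarith)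
    have := hmu_le ((ℓ a a' - lam) + gdist G ℓ a' b' + ℓ b b' - c / 2) (by linarith) (by linarith)
    cases i <;> cases j <;> simp only [ept, off, Bool.false_eq_true, if_true, if_false] <;> linarith
  -- If `bb'` is the edge `aa'`, in either orientation, `c ≤ ℓ(aa') + d(a', a)` forces `mu = 0`.
  · obtain ⟨rfl, rfl⟩ : a = b ∧ a' = b' := Prod.mk.inj h
    have hF₀ := sInf_closedWalkLengths_self_le (ℓ := ℓ) hnn hG hab
    rw [hc] at hF₀
    have := hmu_le 0 le_rfl (by linarith [gdist_self (G := G) hnn a])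
    exact le_abs.mpr (.inl (by dsimp only; linarith [gdist_self (G := G) hnn a]))
  · obtain ⟨rfl, rfl⟩ : a = b' ∧ a' = b := Prod.mk.inj h
    have hF₀ := sInf_closedWalkLengths_self_le (ℓ := ℓ) hnn hG hab
    rw [hcross, hc, gdist_comm hsym] at hF₀
    have := hmu_le 0 le_rfl (by linarith [gdist_self (G := G) hnn a'])
    exact le_abs.mpr (.inr (by dsimp only; linarith [gdist_self (G := G) hnn a', hsym a a']))

end

theorem diam_eq_half_max_closed_walk_general (G H : SimpleGraph V) (hG : G.Connected)
    (hHG : H ≤ G)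
    (ℓ : V → V → ℝ) (hsym : ∀ u v, ℓ u v = ℓ v u) (hnn : ∀ u v, 0 ≤ ℓ u v) :
    sSup {x | ∃ a a' b b' : V, ∃ lam mu : ℝ,
        H.Adj a a' ∧ H.Adj b b' ∧
        lam ∈ Set.Icc 0 (ℓ a a') ∧ mu ∈ Set.Icc 0 (ℓ b b') ∧
        pdist G ℓ (a, a', lam) (b, b', mu) = x}
    = (1/2) * sSup {x | ∃ a a' b b' : V, H.Adj a a' ∧ H.Adj b b' ∧
        x = sInf {y | ∃ (r : V) (w : G.Walk r r),
          s(a, a') ∈ w.edges ∧ s(b, b') ∈ w.edges ∧ walkLen ℓ w = y}} := by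
  rw [← smul_eq_mul, ← Real.sSup_smul_of_nonneg (by norm_num)]
  refine csSup_eq_csSup_of_forall_exists_le ?_ ?_
  · rintro _ ⟨a, a', b, b', lam, mu, hab, hbb, hl, hm, rfl⟩
    refine ⟨_, Set.smul_mem_smul_set ⟨a, a', b, b', hab, hbb, rfl⟩, ?_⟩
    have := two_mul_pdist_le_sInf hG hsym hnn (hHG hab) (hHG hbb) hl hm
    unfold closedWalkLengths at this
    rw [smul_eq_mul]
    linarith
  · rintro _ ⟨_, ⟨a, a', b, b', hab, hbb, rfl⟩, rfl⟩
    obtain ⟨lam, hl, mu, hm, hle⟩ :=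
      exists_sInf_closedWalkLengths_le_two_mul_pdist hG hsym hnn (hHG hab) (hHG hbb)
    unfold closedWalkLengths at hle
    refine ⟨_, ⟨a, a', b, b', lam, mu, hab, hbb, hl, hm, rfl⟩, ?_⟩
    dsimp only
    rw [smul_eq_mul]
    linarith

/-- Let `H` be a connected subgraph of a connected weighted graph `G` with nonnegative
edge lengths, defining continuous graphs `ℋ ⊆ 𝒢`. The diameter of `ℋ` with respect to
`𝒢`, i.e. the supremum over points `p, q` of `ℋ` of `d_𝒢(p,q)`, equals one half of the
maximum over ordered pairs of edges `aa'`, `bb'` of `H` of the length of a shortest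
closed walk in `G` passing through all interior points of `aa'` and of `bb'`. -/
theorem diam_eq_half_max_closed_walk (G H : SimpleGraph V) (hG : G.Connected)
    (hHG : H ≤ G) (hH : H.Connected)
    (ℓ : V → V → ℝ) (hsym : ∀ u v, ℓ u v = ℓ v u) (hnn : ∀ u v, 0 ≤ ℓ u v) :
    sSup {x | ∃ a a' b b' : V, ∃ lam mu : ℝ,
        H.Adj a a' ∧ H.Adj b b' ∧
        lam ∈ Set.Icc 0 (ℓ a a') ∧ mu ∈ Set.Icc 0 (ℓ b b') ∧
        pdist G ℓ (a, a', lam) (b, b', mu) = x}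
    = (1/2) * sSup {x | ∃ a a' b b' : V, H.Adj a a' ∧ H.Adj b b' ∧
        x = sInf {y | ∃ (r : V) (w : G.Walk r r),
          s(a, a') ∈ w.edges ∧ s(b, b') ∈ w.edges ∧ walkLen ℓ w = y}} :=
  diam_eq_half_max_closed_walk_general G H hG hHG ℓ hsym hnn
end

section
/- Let G be a connected weighted graph with separator vertices s1,…,sk such that every shortest path between a ∈ A and b ∈ B passes through some s_i. For a vertex a ∈ A and index i, define the point p(i;a) ∈ ℝ^k with j-th coordinate d(a,s_i) − d(a,s_j); for b ∈ B define the box R(i;b) = I_1×…×I_k with I_j = (−∞, d(b,s_j) − d(b,s_i)) for j < i, I_i = ℝ, and I_j = (−∞, d(b,s_j) − d(b,s_i)] for j > i. Then p(i;a) ∈ R(i;b) if and only if i is the smallest index j such that d(a,b) = d(a,s_j) + d(s_j,b). -/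
open SimpleGraph

variable {V : Type*}

lemma walkLen_reverse_s10 (ℓ : V → V → ℝ) (hsym : ∀ u v, ℓ u v = ℓ v u)
    {G : SimpleGraph V} {a b : V} (w : G.Walk a b) :
    walkLen ℓ w.reverse = walkLen ℓ w := by
  unfold walkLen
  rw [SimpleGraph.Walk.darts_reverse, List.map_reverse, List.map_map, List.sum_reverse]
  congr 1
  apply List.map_congr_left
  intro d _
  simp [SimpleGraph.Dart.symm, hsym d.toProd.1 d.toProd.2]

lemma gdist_symm (G : SimpleGraph V) (ℓ : V → V → ℝ) (hsym : ∀ u v, ℓ u v = ℓ v u)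
    (u v : V) : gdist G ℓ u v = gdist G ℓ v u := by
  unfold gdist
  congr 1
  ext x
  constructor
  · rintro ⟨w, rfl⟩
    exact ⟨w.reverse, walkLen_reverse_s10 ℓ hsym w⟩
  · rintro ⟨w, rfl⟩
    exact ⟨w.reverse, walkLen_reverse_s10 ℓ hsym w⟩

/-- For a vertex `a ∈ A` and index `i`, the point `p(i;a) ∈ ℝ^k` has `j`-th coordinate
`d(a,s i) − d(a,s j)`; for `b ∈ B` the box `R(i;b)` has `j`-th interval
`(−∞, d(b,s j) − d(b,s i))` for `j < i`, all of `ℝ` for `j = i`, and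
`(−∞, d(b,s j) − d(b,s i)]` for `j > i`. If every pair `(a,b) ∈ A × B` has some `s i`
on a shortest `a`-`b` path, then `p(i;a) ∈ R(i;b)` if and only if `i` is the smallest
index `j` such that `d(a,b) = d(a,s j) + d(s j,b)`. -/
theorem point_in_box_iff_first_portal {k : ℕ} (G : SimpleGraph V) (hG : G.Connected)
    (ℓ : V → V → ℝ) (hsym : ∀ u v, ℓ u v = ℓ v u) (hnn : ∀ u v, 0 ≤ ℓ u v)
    (s : Fin k → V) (A B : Set V)
    (hsep : ∀ a ∈ A, ∀ b ∈ B,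
      (∃ i : Fin k, gdist G ℓ a b = gdist G ℓ a (s i) + gdist G ℓ (s i) b) ∧
      ∀ j : Fin k, gdist G ℓ a b ≤ gdist G ℓ a (s j) + gdist G ℓ (s j) b)
    (p : V → Fin k → Fin k → ℝ) (hp : ∀ a i j, p a i j = gdist G ℓ a (s i) - gdist G ℓ a (s j))
    (R : V → Fin k → Set (Fin k → ℝ))
    (hR : ∀ b i, R b i = {x : Fin k → ℝ | ∀ j : Fin k,
        (j < i → x j < gdist G ℓ b (s j) - gdist G ℓ b (s i)) ∧
        (i < j → x j ≤ gdist G ℓ b (s j) - gdist G ℓ b (s i))}) :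
    ∀ a ∈ A, ∀ b ∈ B, ∀ i : Fin k,
      (p a i ∈ R b i ↔
        (gdist G ℓ a b = gdist G ℓ a (s i) + gdist G ℓ (s i) b ∧
         ∀ j : Fin k, j < i →
           gdist G ℓ a b ≠ gdist G ℓ a (s j) + gdist G ℓ (s j) b)) := by
  intro a ha b hb i
  obtain ⟨⟨i0, hi0⟩, hle⟩ := hsep a ha b hb
  set d := gdist G ℓ a b with hd
  set D : Fin k → ℝ := fun j => gdist G ℓ a (s j) + gdist G ℓ (s j) b with hD
  have hmem : p a i ∈ R b i ↔ (∀ j, j < i → D i < D j) ∧ (∀ j, i < j → D i ≤ D j) := by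
    rw [hR]
    simp only [Set.mem_setOf_eq, hp]
    constructor
    · intro h
      constructor
      · intro j hj
        have := (h j).1 hj
        rw [gdist_symm G ℓ hsym b (s j), gdist_symm G ℓ hsym b (s i)] at this
        simp only [hD]; linarith
      · intro j hj
        have := (h j).2 hj
        rw [gdist_symm G ℓ hsym b (s j), gdist_symm G ℓ hsym b (s i)] at this
        simp only [hD]; linarith
    · intro ⟨h1, h2⟩ j
      constructor
      · intro hj
        have := h1 j hj
        simp only [hD] at this
        rw [gdist_symm G ℓ hsym b (s j), gdist_symm G ℓ hsym b (s i)]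
        linarith
      · intro hj
        have := h2 j hj
        simp only [hD] at this
        rw [gdist_symm G ℓ hsym b (s j), gdist_symm G ℓ hsym b (s i)]
        linarith
  rw [hmem]
  constructor
  · rintro ⟨h1, h2⟩
    have hDi : D i ≤ D i0 := by
      rcases lt_trichotomy i0 i with h | h | h
      · exact le_of_lt (h1 i0 h)
      · rw [h]
      · exact h2 i0 h
    simp only [hD] at hDi
    have hdi : d = gdist G ℓ a (s i) + gdist G ℓ (s i) b := by
      have := hle i; linarith
    refine ⟨hdi, fun j hj hne => ?_⟩
    have h3 := h1 j hj
    simp only [hD] at h3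
    linarith
  · rintro ⟨h1, h2⟩
    constructor
    · intro j hj
      have h3 := h2 j hj
      have hle' := hle j
      simp only [hD]
      rcases lt_or_eq_of_le hle' with h | h
      · linarith
      · exact absurd h h3
    · intro j _
      simp only [hD]
      have := hle j
      linarith
end
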